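/- Fix i ∈ I and j ∈ I and let Q^i, Q^j be probabilities satisfying the valuation identity for assets i and j respectively. Then for every stopping time T, the American put-call parity relation AX^{ij}(T) + S^i_0 = AX^{ji}(T) + S^j_0 holds. -/

import Mathlib

open MeasureTheory Filter Set
open scoped NNReal ENNReal

noncomputable section

namespace ExchangeOptions

variable {Ω : Type*} {m : MeasurableSpace Ω}

/-- An extended (possibly infinite-valued) stopping time for the filtration `F`. -/
def IsExtStoppingTime (F : Filtration ℝ≥0 m) (τ : Ω → ℝ≥0∞) : Prop :=
  ∀ t : ℝ≥0, MeasurableSet[F t] {ω | τ ω ≤ (t : ℝ≥0∞)}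

/-- The σ-algebra `F_τ` at an extended stopping time `τ`. -/
def IsExtStoppingTime.measurableSpace {F : Filtration ℝ≥0 m} {τ : Ω → ℝ≥0∞}
    (hτ : IsExtStoppingTime F τ) : MeasurableSpace Ω where
  MeasurableSet' A := ∀ t : ℝ≥0, MeasurableSet[F t] (A ∩ {ω | τ ω ≤ (t : ℝ≥0∞)})
  measurableSet_empty := fun t => by simp
  measurableSet_compl := fun A hA t => by
    have h : Aᶜ ∩ {ω | τ ω ≤ (t : ℝ≥0∞)} =
        {ω | τ ω ≤ (t : ℝ≥0∞)} \ (A ∩ {ω | τ ω ≤ (t : ℝ≥0∞)}) := by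
      ext ω; by_cases h : ω ∈ A <;> simp [h]
    rw [h]
    exact (hτ t).diff (hA t)
  measurableSet_iUnion := fun s hs t => by
    rw [Set.iUnion_inter]
    exact MeasurableSet.iUnion fun n => hs n t

/-- The σ-algebra `F_{τ-}`, generated by `F_0` together with all sets
`A ∩ {s < τ}` where `s : ℝ≥0` and `A ∈ F_s`. -/
def sigmaPre (F : Filtration ℝ≥0 m) (τ : Ω → ℝ≥0∞) : MeasurableSpace Ω :=
  (F 0 : MeasurableSpace Ω) ⊔ MeasurableSpace.generateFrom
    {B | ∃ (s : ℝ≥0) (A : Set Ω), MeasurableSet[F s] A ∧ B = A ∩ {ω | (s : ℝ≥0∞) < τ ω}}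

/-- Evaluation of a process at an extended stopping time (junk value at `∞`). -/
def ev (X : ℝ≥0 → Ω → ℝ) (τ : Ω → ℝ≥0∞) (ω : Ω) : ℝ := X (τ ω).toNNReal ω

/-- The underlying financial model, together with the standing assumptions:
nonnegative adapted assets `S i` vanishing from the default time `ζ` onwards, with
strictly positive a.s.-constant initial values `S0 i`; a nonnegative stochastic discount
factor `Y` with `Y_0 = 1` a.s.; and a sequence `ζn` of stopping times nicely approximating
the default time such that every stopped process `(Y_{ζn ∧ t} S^i_{ζn ∧ t})_t` is a
`P`-a.s. càdlàg martingale.  The probability `P` lives on `F_∞ = ⨆ t, F t`. -/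
structure Model (ι : Type*) {Ω : Type*} {m : MeasurableSpace Ω}
    (F : Filtration ℝ≥0 m) (P : Measure Ω) where
  S : ι → ℝ≥0 → Ω → ℝ
  Y : ℝ≥0 → Ω → ℝ
  S0 : ι → ℝ
  ζ : Ω → ℝ≥0∞
  ζn : ℕ → Ω → ℝ≥0
  nonempty : Nonempty ι
  hFinf : (⨆ t : ℝ≥0, (F t : MeasurableSpace Ω)) = m
  hP : IsProbabilityMeasure P
  hζ : IsExtStoppingTime F ζ
  S_nonneg : ∀ i t ω, 0 ≤ S i t ω
  S_adapted : ∀ i, Adapted F (S i)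
  S_default : ∀ i (t : ℝ≥0) ω, ζ ω ≤ (t : ℝ≥0∞) → S i t ω = 0
  S0_pos : ∀ i, 0 < S0 i
  S0_eq : ∀ i, ∀ᵐ ω ∂P, S i 0 ω = S0 i
  Y_nonneg : ∀ t ω, 0 ≤ Y t ω
  Y0 : ∀ᵐ ω ∂P, Y 0 ω = 1
  ζn_stop : ∀ n, IsStoppingTime F (fun ω => ((ζn n ω : ℝ≥0) : WithTop ℝ≥0))
  ζn_mono : ∀ ω, Monotone fun n => ζn n ω
  ζn_le : ∀ (n : ℕ) ω, ζn n ω ≤ (n : ℝ≥0)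
  ζn_tendsto : ∀ ω, Tendsto (fun n => (ζn n ω : ℝ≥0∞)) atTop (nhds (ζ ω))
  mart : ∀ (n : ℕ) (i : ι),
    Martingale (fun t ω => Y (min (ζn n ω) t) ω * S i (min (ζn n ω) t) ω) F P
  cadlag : ∀ (n : ℕ) (i : ι), ∀ᵐ ω ∂P,
    (∀ t : ℝ≥0, ContinuousWithinAt
      (fun s => Y (min (ζn n ω) s) ω * S i (min (ζn n ω) s) ω) (Set.Ici t) t) ∧
    (∀ t : ℝ≥0, 0 < t → ∃ l : ℝ, Tendsto
      (fun s => Y (min (ζn n ω) s) ω * S i (min (ζn n ω) s) ω)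
      (nhdsWithin t (Set.Iio t)) (nhds l))

variable {ι : Type*} {F : Filtration ℝ≥0 m} {P : Measure Ω}

/-- `Q` satisfies the valuation identity for asset `i`:  `Q` is a probability and, for every
extended stopping time `T` and nonnegative `F_T`-measurable `ξ`,
`E_P[Y_T S^i_T ξ ; T < ζ] = S^i_0 E_Q[ξ ; T < ζ]`. -/
def Model.ValId (M : Model ι F P) (i : ι) (Q : Measure Ω) : Prop :=
  IsProbabilityMeasure Q ∧
  ∀ (T : Ω → ℝ≥0∞) (hT : IsExtStoppingTime F T) (ξ : Ω → ℝ≥0∞),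
    Measurable[hT.measurableSpace] ξ →
    ∫⁻ ω in {ω | T ω < M.ζ ω}, ENNReal.ofReal (ev M.Y T ω * ev (M.S i) T ω) * ξ ω ∂P
      = ENNReal.ofReal (M.S0 i) * ∫⁻ ω in {ω | T ω < M.ζ ω}, ξ ω ∂Q

/-- The asset-price ratio process `R^{ij} = (S^i / S^j) 1_{S^j > 0}`. -/
def Model.R (M : Model ι F P) (i j : ι) (t : ℝ≥0) (ω : Ω) : ℝ :=
  if 0 < M.S j t ω then M.S i t ω / M.S j t ω else 0

/-- `ρ^{ij} = liminf_n R^{ij}_{ζ_n}` (computed in `ℝ≥0∞`). -/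
def Model.rho (M : Model ι F P) (i j : ι) (ω : Ω) : ℝ≥0∞ :=
  Filter.liminf (fun n => ENNReal.ofReal (M.R i j (M.ζn n ω) ω)) atTop

/-- The value `EX^{ij}(T) = E_P[Y_T (S^j_T − S^i_T)_+ ; T < ζ]` of the European option to
exchange asset `i` for asset `j` at time `T`. -/
def Model.EX (M : Model ι F P) (i j : ι) (T : Ω → ℝ≥0∞) : ℝ≥0∞ :=
  ∫⁻ ω in {ω | T ω < M.ζ ω},
    ENNReal.ofReal (ev M.Y T ω * max (ev (M.S j) T ω - ev (M.S i) T ω) 0) ∂P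

/-- The value `AX^{ij}(T) = sup_{τ ≤ T} EX^{ij}(τ)` of the American option to exchange
asset `i` for asset `j` up to time `T`; the supremum is over stopping times `τ ≤ T`. -/
def Model.AX (M : Model ι F P) (i j : ι) (T : Ω → ℝ≥0∞) : ℝ≥0∞ :=
  ⨆ (τ : Ω → ℝ≥0∞) (_ : IsExtStoppingTime F τ) (_ : ∀ ω, τ ω ≤ T ω), M.EX i j τ


end ExchangeOptions

/-!
At a stopping time `σ ≤ ζₙ`, optional sampling for the stopped martingale `Y S^a` gives
`E_P[Y_σ S^a_σ ; σ < ζ] = S^a_0`, because `S^a` vanishes from `ζ` on. Adding this to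
`EX^{ab}(σ)` and using `(S^b - S^a)_+ + S^a = max(S^a, S^b)` yields a quantity symmetric in
`a, b`, hence European parity `EX^{ij}(σ) + S^i_0 = EX^{ji}(σ) + S^j_0`. For an arbitrary
stopping time `τ ≤ T`, `EX^{ji}(τ)` is the increasing limit of its parts over `{τ < ζₙ}`, each
bounded by `EX^{ji}(τ ∧ ζₙ)`; European parity at `τ ∧ ζₙ ≤ T` then bounds `EX^{ji}(τ) + S^j_0`
by `AX^{ij}(T) + S^i_0`. Take the supremum over `τ` and exchange `i` and `j`.
-/

open scoped Topology

section Dyadic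

def dyadicCeil (k : ℕ) (x : ℝ≥0) : ℝ≥0 := ⌈x * 2 ^ k⌉₊ / 2 ^ k

variable (k : ℕ) (x : ℝ≥0)

theorem le_dyadicCeil : x ≤ dyadicCeil k x := by
  rw [dyadicCeil, le_div_iff₀ (by positivity)]
  exact Nat.le_ceil _

theorem dyadicCeil_le_add : dyadicCeil k x ≤ x + (2 ^ k)⁻¹ := by
  rw [dyadicCeil, div_le_iff₀ (by positivity), add_mul, inv_mul_cancel₀ (by positivity)]
  exact (Nat.ceil_lt_add_one zero_le).le

theorem dyadicCeil_le_iff (t : ℝ≥0) :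
    dyadicCeil k x ≤ t ↔ x ≤ ⌊t * 2 ^ k⌋₊ / 2 ^ k := by
  rw [dyadicCeil, div_le_iff₀ (by positivity), le_div_iff₀ (by positivity),
    ← Nat.le_floor_iff zero_le, Nat.ceil_le]

theorem range_dyadicCeil_subset : range (dyadicCeil k) ⊆ range fun j : ℕ => (j : ℝ≥0) / 2 ^ k := by
  rintro _ ⟨x, rfl⟩
  exact ⟨_, rfl⟩

theorem tendsto_dyadicCeil : Tendsto (dyadicCeil · x) atTop (𝓝[≥] x) := by
  have hinv : Tendsto (fun k : ℕ => ((2 : ℝ≥0) ^ k)⁻¹) atTop (𝓝 0) := by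
    simpa only [inv_pow] using NNReal.tendsto_pow_atTop_nhds_zero_of_lt_one (r := 2⁻¹) (by norm_num)
  refine tendsto_nhdsWithin_of_tendsto_nhds_of_eventually_within _ ?_
    (Eventually.of_forall fun k => le_dyadicCeil k x)
  refine tendsto_of_tendsto_of_tendsto_of_le_of_le tendsto_const_nhds ?_
    (le_dyadicCeil · x) (dyadicCeil_le_add · x)
  simpa using tendsto_const_nhds.add hinv

end Dyadic

namespace MeasureTheory

variable {Ω : Type*} {m : MeasurableSpace Ω} {μ : Measure Ω}

theorem UniformIntegrable.tendsto_integral_of_ae_tendsto [IsFiniteMeasure μ]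
    {f : ℕ → Ω → ℝ} {g : Ω → ℝ} (hUI : UniformIntegrable f 1 μ)
    (hfg : ∀ᵐ ω ∂μ, Tendsto (fun n => f n ω) atTop (𝓝 (g ω))) :
    Integrable g μ ∧ Tendsto (fun n => ∫ ω, f n ω ∂μ) atTop (𝓝 (∫ ω, g ω ∂μ)) := by
  have hg := hUI.integrable_of_ae_tendsto hfg
  refine ⟨hg, tendsto_integral_of_L1' g hg.aestronglyMeasurable
    (Eventually.of_forall fun n => memLp_one_iff_integrable.1 (hUI.memLp n)) ?_⟩
  exact tendsto_Lp_finite_of_tendsto_ae le_rfl ENNReal.one_ne_top hUI.1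
    (memLp_one_iff_integrable.2 hg) hUI.2.1 hfg

variable {F : Filtration ℝ≥0 m}

theorem IsStoppingTime.dyadicCeil {σ : Ω → ℝ≥0} (hσ : IsStoppingTime F fun ω => (σ ω : WithTop ℝ≥0))
    (k : ℕ) : IsStoppingTime F fun ω => (dyadicCeil k (σ ω) : WithTop ℝ≥0) := by
  intro t
  have hq : (⌊t * 2 ^ k⌋₊ : ℝ≥0) / 2 ^ k ≤ t := by
    rw [div_le_iff₀ (by positivity)]
    exact Nat.floor_le zero_le
  have h := hσ ((⌊t * 2 ^ k⌋₊ : ℝ≥0) / 2 ^ k)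
  simp only [WithTop.coe_le_coe, dyadicCeil_le_iff] at h ⊢
  exact F.mono hq _ h

/-- Approximate `σ` from above by the dyadic stopping times `dyadicCeil k σ`: there the
discrete optional sampling theorem applies, the values are conditional expectations of
`f (n + 1)`, hence uniformly integrable, and they converge to `f σ` by right-continuity. -/
theorem Martingale.integral_stoppedValue_eq_of_rightContinuous [IsFiniteMeasure μ]
    {f : ℝ≥0 → Ω → ℝ} (hf : Martingale f F μ)
    (hcont : ∀ᵐ ω ∂μ, ∀ t, ContinuousWithinAt (f · ω) (Ici t) t)
    {σ : Ω → ℝ≥0} (hσ : IsStoppingTime F fun ω => (σ ω : WithTop ℝ≥0)) {n : ℝ≥0}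
    (hσn : ∀ ω, σ ω ≤ n) :
    Integrable (fun ω => f (σ ω) ω) μ ∧ ∫ ω, f (σ ω) ω ∂μ = ∫ ω, f 0 ω ∂μ := by
  set σk : ℕ → Ω → ℝ≥0 := fun k ω => dyadicCeil k (σ ω)
  have hσk_le : ∀ k ω, (σk k ω : WithTop ℝ≥0) ≤ (n + 1 : ℝ≥0) := fun k ω =>
    WithTop.coe_le_coe.2 <| (dyadicCeil_le_add k _).trans <| add_le_add (hσn ω) <|
      inv_le_one_of_one_le₀ (one_le_pow₀ one_le_two)
  have hrange : ∀ k, (range fun ω => (σk k ω : WithTop ℝ≥0)).Countable := fun k => by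
    rw [range_comp']
    exact ((countable_range _).mono ((range_comp_subset_range σ (dyadicCeil k)).trans
      (range_dyadicCeil_subset k))).image _
  have hcondExp : ∀ k, (fun ω => f (σk k ω) ω)
      =ᵐ[μ] μ[f (n + 1) | (hσ.dyadicCeil k).measurableSpace] := fun k =>
    hf.stoppedValue_ae_eq_condExp_of_le_const_of_countable_range (hσ.dyadicCeil k)
      (hσk_le k) (hrange k)
  have hUI : UniformIntegrable (fun k ω => f (σk k ω) ω) 1 μ :=
    ((hf.integrable _).uniformIntegrable_condExp
      fun k => (hσ.dyadicCeil k).measurableSpace_le_of_le (hσk_le k)).ae_eq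
      fun k => (hcondExp k).symm
  have hlim : ∀ᵐ ω ∂μ, Tendsto (fun k => f (σk k ω) ω) atTop (𝓝 (f (σ ω) ω)) := by
    filter_upwards [hcont] with ω hω
    exact (hω (σ ω)).tendsto.comp (tendsto_dyadicCeil (σ ω))
  have hconst : ∀ k, ∫ ω, f (σk k ω) ω ∂μ = ∫ ω, f 0 ω ∂μ := fun k => by
    rw [integral_congr_ae (hcondExp k), integral_condExp, ← integral_condExp (F.le 0),
      integral_congr_ae (hf.condExp_ae_eq zero_le)]
  obtain ⟨hint, htendsto⟩ := hUI.tendsto_integral_of_ae_tendsto hlim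
  simp only [hconst, tendsto_const_nhds_iff] at htendsto
  exact ⟨hint, htendsto.symm⟩

end MeasureTheory

namespace ExchangeOptions

variable {Ω ι : Type*} {m : MeasurableSpace Ω} {F : Filtration ℝ≥0 m} {P : Measure Ω}

theorem isExtStoppingTime_const (F : Filtration ℝ≥0 m) (c : ℝ≥0∞) :
    IsExtStoppingTime F fun _ : Ω => c :=
  fun _ => MeasurableSet.const _

theorem IsExtStoppingTime.min {σ τ : Ω → ℝ≥0∞} (hσ : IsExtStoppingTime F σ)
    (hτ : IsExtStoppingTime F τ) : IsExtStoppingTime F fun ω => min (σ ω) (τ ω) := by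
  intro t
  simp only [min_le_iff, ofPred_or]
  exact (hσ t).union (hτ t)

theorem IsExtStoppingTime.measurable {τ : Ω → ℝ≥0∞} (hτ : IsExtStoppingTime F τ) :
    Measurable τ := by
  refine measurable_of_Iic fun x => ?_
  induction x using ENNReal.recTopCoe with
  | top => simp
  | coe t => exact F.le t _ (hτ t)

theorem IsExtStoppingTime.isStoppingTime_toNNReal {τ : Ω → ℝ≥0∞} (hτ : IsExtStoppingTime F τ)
    (hfin : ∀ ω, τ ω ≠ ∞) : IsStoppingTime F fun ω => ((τ ω).toNNReal : WithTop ℝ≥0) := by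
  intro t
  convert hτ t using 1
  ext ω
  rw [mem_ofPred_eq, mem_ofPred_eq, WithTop.coe_le_coe, ← ENNReal.coe_le_coe,
    ENNReal.coe_toNNReal (hfin ω)]

namespace Model

variable (M : Model ι F P)

theorem isExtStoppingTime_ζn (n : ℕ) : IsExtStoppingTime F fun ω => (M.ζn n ω : ℝ≥0∞) := by
  intro t
  simpa only [WithTop.coe_le_coe, ENNReal.coe_le_coe] using M.ζn_stop n t

theorem ζn_le_ζ (n : ℕ) (ω : Ω) : (M.ζn n ω : ℝ≥0∞) ≤ M.ζ ω :=
  ge_of_tendsto (M.ζn_tendsto ω) <| eventually_atTop.2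
    ⟨n, fun _ hk => ENNReal.coe_le_coe.2 (M.ζn_mono ω hk)⟩

theorem ζ_eq_iSup_ζn (ω : Ω) : M.ζ ω = ⨆ n, (M.ζn n ω : ℝ≥0∞) :=
  tendsto_nhds_unique (M.ζn_tendsto ω)
    (tendsto_atTop_iSup fun _ _ hab => ENNReal.coe_le_coe.2 (M.ζn_mono ω hab))

theorem integral_Y_mul_S_eq_S0 (a : ι) (n : ℕ) {σ : Ω → ℝ≥0}
    (hσ : IsStoppingTime F fun ω => (σ ω : WithTop ℝ≥0)) (hσn : ∀ ω, σ ω ≤ M.ζn n ω) :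
    Integrable (fun ω => M.Y (σ ω) ω * M.S a (σ ω) ω) P ∧
      ∫ ω, M.Y (σ ω) ω * M.S a (σ ω) ω ∂P = M.S0 a := by
  have := M.hP
  obtain ⟨hint, hint_eq⟩ := (M.mart n a).integral_stoppedValue_eq_of_rightContinuous
    ((M.cadlag n a).mono fun _ h => h.1) hσ fun ω => (hσn ω).trans (M.ζn_le n ω)
  simp only [min_eq_right (hσn _), min_eq_right (zero_le : (0 : ℝ≥0) ≤ M.ζn n _)] at hint hint_eq
  refine ⟨hint, hint_eq.trans ?_⟩
  have h0 : (fun ω => M.Y 0 ω * M.S a 0 ω) =ᵐ[P] fun _ => M.S0 a := by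
    filter_upwards [M.Y0, M.S0_eq a] with ω hY hS
    rw [hY, hS, one_mul]
  simp [integral_congr_ae h0]

theorem setLIntegral_Y_mul_S_eq_S0 (a : ι) (n : ℕ) {σ : Ω → ℝ≥0∞}
    (hσ : IsExtStoppingTime F σ) (hσn : ∀ ω, σ ω ≤ M.ζn n ω) :
    AEMeasurable (fun ω => ENNReal.ofReal (ev M.Y σ ω * ev (M.S a) σ ω)) P ∧
      ∫⁻ ω in {ω | σ ω < M.ζ ω}, ENNReal.ofReal (ev M.Y σ ω * ev (M.S a) σ ω) ∂P
        = ENNReal.ofReal (M.S0 a) := by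
  have hfin : ∀ ω, σ ω ≠ ∞ := fun ω => ne_top_of_le_ne_top ENNReal.coe_ne_top (hσn ω)
  have hcoe : ∀ ω, ((σ ω).toNNReal : ℝ≥0∞) = σ ω := fun ω => ENNReal.coe_toNNReal (hfin ω)
  obtain ⟨hint, hint_eq⟩ := M.integral_Y_mul_S_eq_S0 a n (hσ.isStoppingTime_toNNReal hfin)
    fun ω => by rw [← ENNReal.coe_le_coe, hcoe]; exact hσn ω
  have hmeas : MeasurableSet {ω | σ ω < M.ζ ω} := measurableSet_lt hσ.measurable M.hζ.measurable
  refine ⟨hint.1.aemeasurable.ennreal_ofReal, ?_⟩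
  rw [← lintegral_indicator hmeas, ← hint_eq, ofReal_integral_eq_lintegral_ofReal hint
    (Eventually.of_forall fun ω => mul_nonneg (M.Y_nonneg _ _) (M.S_nonneg _ _ _))]
  refine lintegral_congr fun ω => ?_
  by_cases hω : ω ∈ {ω | σ ω < M.ζ ω}
  · exact indicator_of_mem hω _
  · rw [indicator_of_notMem hω, M.S_default a _ ω (by rw [hcoe]; exact not_lt.1 hω),
      mul_zero, ENNReal.ofReal_zero]

theorem EX_add_setLIntegral_Y_mul_S (a b : ι) (σ : Ω → ℝ≥0∞)
    (hmeas : AEMeasurable (fun ω => ENNReal.ofReal (ev M.Y σ ω * ev (M.S a) σ ω)) P) :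
    M.EX a b σ + ∫⁻ ω in {ω | σ ω < M.ζ ω}, ENNReal.ofReal (ev M.Y σ ω * ev (M.S a) σ ω) ∂P
      = ∫⁻ ω in {ω | σ ω < M.ζ ω},
          ENNReal.ofReal (ev M.Y σ ω * max (ev (M.S a) σ ω) (ev (M.S b) σ ω)) ∂P := by
  rw [EX, ← lintegral_add_right' _ hmeas.restrict]
  refine lintegral_congr fun ω => ?_
  have hY : 0 ≤ ev M.Y σ ω := M.Y_nonneg _ _
  have hS : 0 ≤ ev (M.S a) σ ω := M.S_nonneg _ _ _
  rw [← ENNReal.ofReal_add (mul_nonneg hY (le_max_right _ _)) (mul_nonneg hY hS),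
    ← mul_add, ← max_add_add_right, sub_add_cancel, zero_add, max_comm]

theorem EX_add_S0_comm (i j : ι) (n : ℕ) {σ : Ω → ℝ≥0∞} (hσ : IsExtStoppingTime F σ)
    (hσn : ∀ ω, σ ω ≤ M.ζn n ω) :
    M.EX i j σ + ENNReal.ofReal (M.S0 i) = M.EX j i σ + ENNReal.ofReal (M.S0 j) := by
  obtain ⟨hmi, hi⟩ := M.setLIntegral_Y_mul_S_eq_S0 i n hσ hσn
  obtain ⟨hmj, hj⟩ := M.setLIntegral_Y_mul_S_eq_S0 j n hσ hσn
  rw [← hi, ← hj, M.EX_add_setLIntegral_Y_mul_S i j σ hmi, M.EX_add_setLIntegral_Y_mul_S j i σ hmj]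
  simp only [max_comm]

theorem EX_le_AX (i j : ι) {σ T : Ω → ℝ≥0∞} (hσ : IsExtStoppingTime F σ) (hσT : ∀ ω, σ ω ≤ T ω) :
    M.EX i j σ ≤ M.AX i j T :=
  le_iSup_of_le σ <| le_iSup_of_le hσ <| le_iSup_of_le hσT le_rfl

theorem EX_le_iSup_EX_min_ζn (i j : ι) {τ : Ω → ℝ≥0∞} (hτ : IsExtStoppingTime F τ) :
    M.EX i j τ ≤ ⨆ n, M.EX i j fun ω => min (τ ω) (M.ζn n ω) := by
  have hunion : {ω | τ ω < M.ζ ω} = ⋃ n, {ω | τ ω < M.ζn n ω} := by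
    ext ω
    simp only [mem_ofPred_eq, mem_iUnion, M.ζ_eq_iSup_ζn ω, lt_iSup_iff]
  have hdir : Directed (· ⊆ ·) fun n => {ω | τ ω < M.ζn n ω} :=
    Monotone.directed_le fun _ _ hkl ω hω =>
      hω.trans_le (ENNReal.coe_le_coe.2 (M.ζn_mono ω hkl))
  rw [EX, hunion, setLIntegral_iUnion_of_directed _ hdir]
  refine iSup_mono fun n => ?_
  have hmeas : MeasurableSet {ω | τ ω < M.ζn n ω} :=
    measurableSet_lt hτ.measurable (M.isExtStoppingTime_ζn n).measurable
  have hsub : {ω | τ ω < M.ζn n ω} ⊆ {ω | min (τ ω) (M.ζn n ω) < M.ζ ω} :=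
    fun ω (hω : τ ω < M.ζn n ω) => (min_le_left _ _).trans_lt (hω.trans_le (M.ζn_le_ζ n ω))
  refine (setLIntegral_congr_fun hmeas fun ω (hω : τ ω < M.ζn n ω) => ?_).trans_le
    (lintegral_mono_set hsub)
  simp only [ev, min_eq_left hω.le]

theorem EX_add_S0_le_AX_add_S0 (i j : ι) {τ T : Ω → ℝ≥0∞} (hτ : IsExtStoppingTime F τ)
    (hτT : ∀ ω, τ ω ≤ T ω) :
    M.EX j i τ + ENNReal.ofReal (M.S0 j) ≤ M.AX i j T + ENNReal.ofReal (M.S0 i) := by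
  grw [M.EX_le_iSup_EX_min_ζn j i hτ, ENNReal.iSup_add]
  refine iSup_le fun n => ?_
  have hσ := hτ.min (M.isExtStoppingTime_ζn n)
  rw [← M.EX_add_S0_comm i j n hσ fun ω => min_le_right _ _]
  grw [M.EX_le_AX i j hσ fun ω => (min_le_left _ _).trans (hτT ω)]

theorem AX_add_S0_le (i j : ι) (T : Ω → ℝ≥0∞) :
    M.AX j i T + ENNReal.ofReal (M.S0 j) ≤ M.AX i j T + ENNReal.ofReal (M.S0 i) := by
  rw [AX]
  simp only [iSup_and']
  rw [ENNReal.biSup_add' ⟨0, isExtStoppingTime_const F 0, fun _ => zero_le⟩]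
  exact iSup₂_le fun τ hτ => M.EX_add_S0_le_AX_add_S0 i j hτ.1 hτ.2

end Model

theorem stmt17_general {Ω ι : Type*} {m : MeasurableSpace Ω} {F : Filtration ℝ≥0 m} {P : Measure Ω}
    (M : Model ι F P) (i j : ι)
    (T : Ω → ℝ≥0∞) :
    M.AX i j T + ENNReal.ofReal (M.S0 i) = M.AX j i T + ENNReal.ofReal (M.S0 j) :=
  le_antisymm (M.AX_add_S0_le j i T) (M.AX_add_S0_le i j T)

/-- American put-call parity: for `Q^i, Q^j` satisfying the valuation
identities, for every stopping time `T`, `AX^{ij}(T) + S^i_0 = AX^{ji}(T) + S^j_0`. -/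
theorem stmt17 {Ω ι : Type*} {m : MeasurableSpace Ω} {F : Filtration ℝ≥0 m} {P : Measure Ω}
    (M : Model ι F P) (i j : ι) (Qi Qj : Measure Ω)
    (hQi : M.ValId i Qi) (hQj : M.ValId j Qj)
    (T : Ω → ℝ≥0∞) (hT : IsExtStoppingTime F T) :
    M.AX i j T + ENNReal.ofReal (M.S0 i) = M.AX j i T + ENNReal.ofReal (M.S0 j) :=
  stmt17_general M i j T

end ExchangeOptions
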